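/- arXiv:2209.09640 — 2 statements merged into one kernel-verified Lean document; each statement's English description precedes it below -/
import Mathlib

section
/- If two distinct global states s₁ and s₂ yield the same local observation tuple (O(s₁) = O(s₂)), and the optimal joint actions differ (argmax_u Q_tot(s₁,u) ≠ argmax_u Q_tot(s₂,u), both argmaxes unique), then for every family of local q_i : T × U → ℝ, the IGM condition fails at s₁ or at s₂. -/
theorem stmt_1 {S U T : Type} (n : ℕ)
    (O : S → Fin n → T) (Qtot : S → (Fin n → U) → ℝ)
    (s₁ s₂ : S) (hO : O s₁ = O s₂)
    (u₁ u₂ : Fin n → U)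
    (h₁ : ∀ v, v ≠ u₁ → Qtot s₁ v < Qtot s₁ u₁)
    (h₂ : ∀ v, v ≠ u₂ → Qtot s₂ v < Qtot s₂ u₂)
    (hne : u₁ ≠ u₂)
    (q : Fin n → T → U → ℝ) :
    ¬ ((∀ i a, a ≠ u₁ i → q i (O s₁ i) a < q i (O s₁ i) (u₁ i)) ∧
       (∀ i a, a ≠ u₂ i → q i (O s₂ i) a < q i (O s₂ i) (u₂ i))) := by
  rintro ⟨hq₁, hq₂⟩
  obtain ⟨i, hi⟩ := Function.ne_iff.mp hne
  have A := hq₁ i (u₂ i) (Ne.symm hi)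
  have B := hq₂ i (u₁ i) hi
  rw [← hO] at B
  exact absurd (A.trans B) (lt_irrefl _)
end

section
/- Suppose for each state s the function u ↦ Σ_i f_i(q_i(u_i), s) is the mixing of local utilities, where each f_i(·, s) : ℝ → ℝ is strictly monotonically increasing. Then the joint action maximizing Q_tot(s,u) := Σ_i f_i(q_i(u_i), s) is exactly the tuple of actions individually maximizing each q_i; i.e., strict monotonicity of the mixing network is sufficient for the IGM condition. -/
theorem stmt_10 {S U : Type} [Fintype U] (n : ℕ)
    (q : Fin n → U → ℝ) (ustar : Fin n → U)
    (hstar : ∀ i u, u ≠ ustar i → q i u < q i (ustar i))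
    (f : Fin n → ℝ → S → ℝ) (s : S)
    (hf : ∀ i, StrictMono (fun x => f i x s)) :
    ∀ u : Fin n → U, u ≠ ustar →
      ∑ i, f i (q i (u i)) s < ∑ i, f i (q i (ustar i)) s := by
  intro u hu
  obtain ⟨i, hi⟩ := Function.ne_iff.mp hu
  apply Finset.sum_lt_sum
  · intro j _
    rcases eq_or_ne (u j) (ustar j) with h | h
    · rw [h]
    · exact le_of_lt ((hf j) (hstar j (u j) h))
  · exact ⟨i, Finset.mem_univ i, (hf i) (hstar i (u i) hi)⟩
end
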